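/- Let k ≥ 1 be an integer, G a graph, and X, Y ⊆ V(G) strongly linked sets with |X| ≥ k and |Y| ≥ 3k. Then one of the following holds: (1) there exist k pairwise vertex-disjoint paths in G, each with one endpoint in X and the other endpoint in Y; or (2) for every separation (A,B) of G of order less than k with X ⊆ A and |Y ∩ B| ≥ k, either (a) there exists a separation (A',B') of G of order less than k with X ⊆ A', |Y ∩ B'| ≥ k, A ⊆ A' and B' ⊊ B, or (b) there exists an edge e of the induced subgraph G[B] such that X is strongly linked in G − e. -/
import Mathlib


open SimpleGraph

/-- `H` is a minor of `G`: branch sets are nonempty, connected, pairwise disjoint,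
and every edge of `H` is realized by an edge of `G` between the branch sets. -/
def IsMinor {V W : Type*} (H : SimpleGraph V) (G : SimpleGraph W) : Prop :=
  ∃ S : V → Set W,
    (∀ a, (G.induce (S a)).Connected) ∧
    (∀ a b, a ≠ b → Disjoint (S a) (S b)) ∧
    (∀ a b, H.Adj a b → ∃ x ∈ S a, ∃ y ∈ S b, G.Adj x y)

/-- `H` is an `X`-minor of `G`: additionally every branch set meets `X`. -/
def IsMinorOn {V W : Type*} (H : SimpleGraph V) (G : SimpleGraph W) (X : Set W) : Prop :=
  ∃ S : V → Set W,
    (∀ a, (G.induce (S a)).Connected) ∧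
    (∀ a, (S a ∩ X).Nonempty) ∧
    (∀ a b, a ≠ b → Disjoint (S a) (S b)) ∧
    (∀ a b, H.Adj a b → ∃ x ∈ S a, ∃ y ∈ S b, G.Adj x y)

/-- The `(k × k)`-grid graph. -/
def gridGraph (k : ℕ) : SimpleGraph (Fin k × Fin k) :=
  SimpleGraph.fromRel fun p q =>
    (p.1 = q.1 ∧ (p.2 : ℕ) + 1 = (q.2 : ℕ)) ∨ (p.2 = q.2 ∧ (p.1 : ℕ) + 1 = (q.1 : ℕ))

/-- `bg(G, X)`: the largest `k` such that the `(k × k)`-grid is an `X`-minor of `G`. -/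
noncomputable def bgAnn {V : Type*} (G : SimpleGraph V) (X : Set V) : ℕ :=
  sSup {k | IsMinorOn (gridGraph k) G X}

/-- The Hadwiger number: the largest `t` with `K_t` a minor of `G`. -/
noncomputable def hw {V : Type*} (G : SimpleGraph V) : ℕ :=
  sSup {t | IsMinor (⊤ : SimpleGraph (Fin t)) G}

/-- The adjacency relation of the mixed surface grid of order `k` with `b` blocks,
crosscap positions `Ic` and handle positions `Ih`. -/
def msgRel (k b : ℕ) (Ic Ih : Finset ℕ) (p q : Fin k × ZMod (4 * b * k)) : Prop :=
  (p.1 = q.1 ∧ q.2 = p.2 + 1) ∨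
  (p.2 = q.2 ∧ (p.1 : ℕ) + 1 = (q.1 : ℕ)) ∨
  ((p.1 : ℕ) = 0 ∧ (q.1 : ℕ) = 0 ∧
    ((∃ i ∈ Ic, ∃ j ∈ Finset.Icc 1 (2 * k),
        p.2 = ((4 * k * (i - 1) + j : ℕ) : ZMod (4 * b * k)) ∧
        q.2 = ((4 * k * (i - 1) + 2 * k + j : ℕ) : ZMod (4 * b * k))) ∨
     (∃ i ∈ Ih, ∃ j ∈ Finset.Icc 1 k,
        ((p.2 = ((4 * k * (i - 1) + j : ℕ) : ZMod (4 * b * k)) ∧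
          q.2 = ((4 * k * (i - 1) + 3 * k - j + 1 : ℕ) : ZMod (4 * b * k))) ∨
         (p.2 = ((4 * k * (i - 1) + k + j : ℕ) : ZMod (4 * b * k)) ∧
          q.2 = ((4 * k * (i - 1) + 4 * k + j - 1 : ℕ) : ZMod (4 * b * k)))))))

/-- The mixed surface grid of order `k` with `b` blocks, crosscaps at the positions of `Ic`
and handles at the positions of `Ih`. -/
def mixedSurfaceGrid (k b : ℕ) (Ic Ih : Finset ℕ) : SimpleGraph (Fin k × ZMod (4 * b * k)) :=
  SimpleGraph.fromRel (msgRel k b Ic Ih)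

/-- The Dyck-grid `D_k^{(h,c)}`. -/
def dyckGrid (k h c : ℕ) : SimpleGraph (Fin k × ZMod (4 * (h + c + 1) * k)) :=
  mixedSurfaceGrid k (h + c + 1) (Finset.Icc (h + 2) (h + c + 1)) (Finset.Icc 2 (h + 1))

/-- The reduced Dyck-grid `D̃_k^{(h,c)}` (no plain annulus block). -/
def reducedDyckGrid (k h c : ℕ) : SimpleGraph (Fin k × ZMod (4 * (h + c) * k)) :=
  mixedSurfaceGrid k (h + c) (Finset.Icc (h + 1) (h + c)) (Finset.Icc 1 h)

/-- `(A, B)` is a separation of `G`. -/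
def IsSep {V : Type*} (G : SimpleGraph V) (A B : Set V) : Prop :=
  A ∪ B = Set.univ ∧ ∀ u v, G.Adj u v → u ∈ A \ B → v ∉ B \ A

/-- `Z` is an `α`-balanced separator for `S` in `G`. -/
def IsBalSep {V : Type*} (G : SimpleGraph V) (α : ℝ) (S Z : Set V) : Prop :=
  ∀ C : (G.induce Zᶜ).ConnectedComponent,
    ((((Subtype.val '' C.supp) ∩ S).ncard : ℝ)) ≤ α * (S.ncard : ℝ)

/-- `S` is `(q, α)`-well-linked in `G`. -/
def WellLinked {V : Type*} (G : SimpleGraph V) (q : ℕ) (α : ℝ) (S : Set V) : Prop :=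
  ∀ Z : Set V, Z.ncard ≤ q → ¬ IsBalSep G α S Z

/-- `T` is a tangle of order `k` in `G`. -/
def IsTangle {V : Type*} (G : SimpleGraph V) (k : ℕ) (T : Set (Set V × Set V)) : Prop :=
  (∀ p ∈ T, IsSep G p.1 p.2 ∧ (p.1 ∩ p.2).ncard < k) ∧
  (∀ A B : Set V, IsSep G A B → (A ∩ B).ncard < k →
      (((A, B) ∈ T ∧ (B, A) ∉ T) ∨ ((B, A) ∈ T ∧ (A, B) ∉ T))) ∧
  (∀ p q r, p ∈ T → q ∈ T → r ∈ T → p.1 ∪ q.1 ∪ r.1 ≠ Set.univ)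

/-- The tangle `𝒯_S` induced by a `(q, α)`-well-linked set `S`. -/
def wlTangle {V : Type*} (G : SimpleGraph V) (q : ℕ) (α : ℝ) (S : Set V) :
    Set (Set V × Set V) :=
  {p | IsSep G p.1 p.2 ∧ (p.1 ∩ p.2).ncard ≤ q ∧ α * (S.ncard : ℝ) < ((S ∩ p.2).ncard : ℝ)}

/-- `F` is `S`-free in `G`. -/
def SFree {V : Type*} (G : SimpleGraph V) (α : ℝ) (S F : Set V) : Prop :=
  ∀ A B : Set V, IsSep G A B → (A ∩ B).ncard < F.ncard →
    (F ⊆ A → α * (S.ncard : ℝ) < ((A ∩ S).ncard : ℝ)) ∧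
    (F ⊆ B → α * (S.ncard : ℝ) < ((B ∩ S).ncard : ℝ))

/-- `S` is strongly linked in `G`. -/
def StronglyLinked {V : Type*} (G : SimpleGraph V) (S : Set V) : Prop :=
  ∀ S₁ S₂ : Set V, S₁ ∪ S₂ = S → Disjoint S₁ S₂ → S₁.Nonempty → S₂.Nonempty →
    ∀ A₁ A₂ : Set V, IsSep G A₁ A₂ → S₁ ⊆ A₁ → S₂ ⊆ A₂ →
      min S₁.ncard S₂.ncard ≤ (A₁ ∩ A₂).ncard

/-- The `(k × 2k)`-grid with the appropriate vertical edges removed (before deleting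
degree-one vertices). -/
def wallPre (k : ℕ) : SimpleGraph (Fin k × Fin (2 * k)) :=
  SimpleGraph.fromRel fun p q =>
    (p.1 = q.1 ∧ (p.2 : ℕ) + 1 = (q.2 : ℕ)) ∨
    (p.2 = q.2 ∧ (p.1 : ℕ) + 1 = (q.1 : ℕ) ∧ ((p.1 : ℕ) + (p.2 : ℕ)) % 2 = 1)

/-- The vertices of the elementary `k`-wall: vertices of `wallPre` of degree at least two. -/
def wallVerts (k : ℕ) : Set (Fin k × Fin (2 * k)) :=
  {v | ∃ a b, a ≠ b ∧ (wallPre k).Adj v a ∧ (wallPre k).Adj v b}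

/-- The elementary `k`-wall. -/
def elemWall (k : ℕ) : SimpleGraph (wallVerts k) :=
  (wallPre k).induce (wallVerts k)

/-- `(f, p)` is a subdivision of `H` embedded as a subgraph of `G`. -/
def IsSubdivEmbed {V W : Type*} (H : SimpleGraph V) (G : SimpleGraph W)
    (f : V → W) (p : ∀ u v, H.Adj u v → G.Walk (f u) (f v)) : Prop :=
  Function.Injective f ∧
  (∀ u v (h : H.Adj u v), (p u v h).IsPath) ∧
  (∀ u v (h : H.Adj u v), (p u v h).support = (p v u h.symm).support) ∧
  (∀ u v (h : H.Adj u v), ∀ w ∈ (p u v h).support, w ∈ Set.range f → w = f u ∨ w = f v) ∧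
  (∀ u v u' v' (h : H.Adj u v) (h' : H.Adj u' v'), s(u, v) ≠ s(u', v') →
    ∀ w : W, w ∈ (p u v h).support → w ∈ (p u' v' h').support →
      ((w = f u ∨ w = f v) ∧ (w = f u' ∨ w = f v')))

/-- The vertex set in `G` of the `i`-th row of an embedded `k`-wall. -/
def wallRowSet {V : Type*} {G : SimpleGraph V} (k : ℕ)
    (f : wallVerts k → V) (p : ∀ u v, (elemWall k).Adj u v → G.Walk (f u) (f v))
    (i : Fin k) : Set V :=
  (f '' {v | v.val.1 = i}) ∪
  {w | ∃ u v, ∃ h : (elemWall k).Adj u v,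
      u.val.1 = i ∧ v.val.1 = i ∧ w ∈ (p u v h).support}

/-- The vertex set in `G` of the `j`-th column of an embedded `k`-wall. -/
def wallColSet {V : Type*} {G : SimpleGraph V} (k : ℕ)
    (f : wallVerts k → V) (p : ∀ u v, (elemWall k).Adj u v → G.Walk (f u) (f v))
    (j : Fin k) : Set V :=
  (f '' {v | (v.val.2 : ℕ) / 2 = (j : ℕ)}) ∪
  {w | ∃ u v, ∃ h : (elemWall k).Adj u v,
      (u.val.2 : ℕ) / 2 = (j : ℕ) ∧ (v.val.2 : ℕ) / 2 = (j : ℕ) ∧ w ∈ (p u v h).support}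

/-- The tangle `𝒯_W` induced by an embedded `k`-wall. -/
def wallTangle {V : Type*} (G : SimpleGraph V) (k : ℕ)
    (f : wallVerts k → V) (p : ∀ u v, (elemWall k).Adj u v → G.Walk (f u) (f v)) :
    Set (Set V × Set V) :=
  {AB | IsSep G AB.1 AB.2 ∧ (AB.1 ∩ AB.2).ncard < k ∧
    ∃ i j : Fin k, wallRowSet k f p i ⊆ AB.2 \ AB.1 ∧ wallColSet k f p j ⊆ AB.2 \ AB.1}

/-- All vertices of `G` used by an embedded `k`-wall. -/
def wallSupport {V : Type*} {G : SimpleGraph V} (k : ℕ)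
    (f : wallVerts k → V) (p : ∀ u v, (elemWall k).Adj u v → G.Walk (f u) (f v)) : Set V :=
  Set.range f ∪ {w | ∃ u v, ∃ h : (elemWall k).Adj u v, w ∈ (p u v h).support}

/-- `(T, β)` is a tree-decomposition of `G`. -/
def IsTreeDecomp {V : Type*} {ι : Type*} (G : SimpleGraph V) (T : SimpleGraph ι)
    (β : ι → Set V) : Prop :=
  T.IsTree ∧
  (∀ v : V, ∃ t, v ∈ β t) ∧
  (∀ u v, G.Adj u v → ∃ t, u ∈ β t ∧ v ∈ β t) ∧
  (∀ v : V, (T.induce {t | v ∈ β t}).Connected)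

/-- The torso of a tree-decomposition `(T, β)` of `G` at a node `t`. -/
def torso {V : Type*} {ι : Type*} (G : SimpleGraph V) (T : SimpleGraph ι)
    (β : ι → Set V) (t : ι) : SimpleGraph (β t) :=
  SimpleGraph.fromRel fun u v =>
    G.Adj u v ∨ ∃ t', T.Adj t t' ∧ (u : V) ∈ β t' ∧ (v : V) ∈ β t'

/-- The graph `G^c` on `V(G)` with edge set `E(G) ∪ E(G_t)`. -/
def withTorsoEdges {V : Type*} {ι : Type*} (G : SimpleGraph V) (T : SimpleGraph ι)
    (β : ι → Set V) (t : ι) : SimpleGraph V :=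
  SimpleGraph.fromRel fun u v =>
    G.Adj u v ∨ ∃ (hu : u ∈ β t) (hv : v ∈ β t), (torso G T β t).Adj ⟨u, hu⟩ ⟨v, hv⟩

/-- Interior vertices of the `(t+2) × (t+2)`-grid. -/
def gridInterior (t : ℕ) (p : Fin (t + 2) × Fin (t + 2)) : Prop :=
  0 < (p.1 : ℕ) ∧ (p.1 : ℕ) < t + 1 ∧ 0 < (p.2 : ℕ) ∧ (p.2 : ℕ) < t + 1

/-- The `(t+2) × (t+2)`-grid with all edges whose two endpoints have degree
less than four removed. -/
def crossedPre (t : ℕ) : SimpleGraph (Fin (t + 2) × Fin (t + 2)) :=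
  SimpleGraph.fromRel fun a b =>
    ((a.1 = b.1 ∧ (a.2 : ℕ) + 1 = (b.2 : ℕ)) ∨ (a.2 = b.2 ∧ (a.1 : ℕ) + 1 = (b.1 : ℕ))) ∧
    (gridInterior t a ∨ gridInterior t b)

/-- The line graph of `K`. -/
def lineGraph' {W : Type*} (K : SimpleGraph W) : SimpleGraph K.edgeSet :=
  SimpleGraph.fromRel fun e f => ∃ x, x ∈ (e : Sym2 W) ∧ x ∈ (f : Sym2 W)

/-- `G` contains a crossed `t`-grid as a subgraph. -/
def ContainsCrossedGrid {V : Type*} (t : ℕ) (G : SimpleGraph V) : Prop :=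
  ∃ (n : ℕ) (K : SimpleGraph (Fin n))
    (f : Fin (t + 2) × Fin (t + 2) → Fin n)
    (p : ∀ u v, (crossedPre t).Adj u v → K.Walk (f u) (f v)),
    IsSubdivEmbed (crossedPre t) K f p ∧
    (∀ w : Fin n, ∃ u v h, w ∈ (p u v h).support) ∧
    (∀ e ∈ K.edgeSet, ∃ u v h, e ∈ (p u v h).edges) ∧
    (∀ u v (h : (crossedPre t).Adj u v), 2 ≤ (p u v h).length) ∧
    ∃ φ : K.edgeSet → V, Function.Injective φ ∧
      ∀ e e', (lineGraph' K).Adj e e' → G.Adj (φ e) (φ e')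

/-- The satellite-augmented reduced Dyck-grid `D̂_k^{(h,c)}`. -/
def hatRel (k h c : ℕ)
    (a b : (Fin k × ZMod (4 * (h + c) * k)) ⊕ (Fin (h + c) × Fin k)) : Prop :=
  (∃ p q, a = Sum.inl p ∧ b = Sum.inl q ∧
     msgRel k (h + c) (Finset.Icc (h + 1) (h + c)) (Finset.Icc 1 h) p q) ∨
  (∃ s p, a = Sum.inr s ∧ b = Sum.inl p ∧ (p.1 : ℕ) = 0 ∧
     ∃ j ∈ Finset.Icc 1 4,
       p.2 = ((4 * k * (s.1 : ℕ) + 4 * (s.2 : ℕ) + j : ℕ) : ZMod (4 * (h + c) * k)))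

def hatDyckGrid (k h c : ℕ) :
    SimpleGraph ((Fin k × ZMod (4 * (h + c) * k)) ⊕ (Fin (h + c) × Fin k)) :=
  SimpleGraph.fromRel (hatRel k h c)

section Aux

private lemma isSep_symm {V : Type} {G : SimpleGraph V} {A B : Set V}
    (h : IsSep G A B) : IsSep G B A :=
  ⟨by rw [Set.union_comm]; exact h.1, fun u v hadj hu hv => h.2 v u hadj.symm hv hu⟩

private lemma sep_aux {V : Type} [Finite V] {G : SimpleGraph V} {k : ℕ}
    {X A B : Set V} (hsep : IsSep G A B) (hord : (A ∩ B).ncard < k) (hXA : X ⊆ A)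
    (hX : StronglyLinked G X)
    {x y : V} (hxy : G.Adj x y) (hxB : x ∈ B) (hxA : x ∉ A) (hyB : y ∈ B) (hyA : y ∉ A)
    {X₁ X₂ : Set V} (hu : X₁ ∪ X₂ = X) (hd : Disjoint X₁ X₂)
    (h1 : X₁.Nonempty) (h2 : X₂.Nonempty)
    {A₁ A₂ : Set V} (hs' : IsSep (G.deleteEdges {s(x, y)}) A₁ A₂)
    (hX1 : X₁ ⊆ A₁) (hX2 : X₂ ⊆ A₂)
    (hlt : (A₁ ∩ A₂).ncard < min X₁.ncard X₂.ncard)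
    (hx1 : x ∈ A₁) (hx2 : x ∉ A₂) (hy2 : y ∈ A₂) (hy1 : y ∉ A₁) :
    IsSep G (A ∪ A₁) ((B ∩ A₂) ∪ {x}) ∧
      ((A ∪ A₁) ∩ ((B ∩ A₂) ∪ {x})).ncard < k ∧
      (B ∩ A₂) ∪ {x} ⊆ B ∧ (B ∩ A₂) ∪ {x} ≠ B := by
  classical
  have hcovAB : ∀ z : V, z ∉ A → z ∈ B := fun z hz =>
    (show z ∈ A ∪ B from hsep.1 ▸ Set.mem_univ z).resolve_left hz
  have hcov12 : ∀ z : V, z ∉ A₁ → z ∈ A₂ := fun z hz =>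
    (show z ∈ A₁ ∪ A₂ from hs'.1 ▸ Set.mem_univ z).resolve_left hz
  have hcov21 : ∀ z : V, z ∉ A₂ → z ∈ A₁ := fun z hz =>
    (show z ∈ A₁ ∪ A₂ from hs'.1 ▸ Set.mem_univ z).resolve_right hz
  -- the only G-edge crossing (A₁, A₂) is x–y
  have hdel : ∀ u v : V, G.Adj u v → u ∈ A₁ → u ∉ A₂ → v ∈ A₂ → v ∉ A₁ →
      u = x ∧ v = y := by
    intro u v hadj hu1 hu2 hv2 hv1
    by_cases hmem : s(u, v) = s(x, y)
    · rw [Sym2.eq_iff] at hmem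
      rcases hmem with ⟨rfl, rfl⟩ | ⟨rfl, rfl⟩
      · exact ⟨rfl, rfl⟩
      · exact absurd hy2 hu2
    · exact absurd ⟨hv2, hv1⟩
        (hs'.2 u v (SimpleGraph.deleteEdges_adj.mpr ⟨hadj, by simpa using hmem⟩) ⟨hu1, hu2⟩)
  -- the corner separation (A₂ ∪ B, A ∩ A₁)
  have hW : IsSep G (A₂ ∪ B) (A ∩ A₁) := by
    constructor
    · apply Set.eq_univ_of_forall
      intro z
      by_cases hzA : z ∈ A
      · by_cases hz1 : z ∈ A₁
        · exact Or.inr ⟨hzA, hz1⟩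
        · exact Or.inl (Or.inl (hcov12 z hz1))
      · exact Or.inl (Or.inr (hcovAB z hzA))
    · rintro u v hadj ⟨hu', hu''⟩ ⟨⟨hvA, hv1⟩, hv'⟩
      have hv2 : v ∉ A₂ := fun h => hv' (Or.inl h)
      have hvB : v ∉ B := fun h => hv' (Or.inr h)
      by_cases hu1 : u ∈ A₁
      · have huA : u ∉ A := fun h => hu'' ⟨h, hu1⟩
        exact hsep.2 v u hadj.symm ⟨hvA, hvB⟩ ⟨hcovAB u huA, huA⟩
      · have hu2 : u ∈ A₂ := hcov12 u hu1
        obtain ⟨hvx, _⟩ := hdel v u hadj.symm hv1 hv2 hu2 hu1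
        exact hxA (hvx ▸ hvA)
  have hX1X : X₁ ⊆ X := hu ▸ Set.subset_union_left
  have hX2X : X₂ ⊆ X := hu ▸ Set.subset_union_right
  have hII0 : min X₁.ncard X₂.ncard ≤ ((A₂ ∪ B) ∩ (A ∩ A₁)).ncard := by
    have := hX X₂ X₁ (by rw [Set.union_comm]; exact hu) hd.symm h2 h1 (A₂ ∪ B) (A ∩ A₁)
      hW (fun z hz => Or.inl (hX2 hz)) (fun z hz => ⟨hXA (hX1X hz), hX1 hz⟩)
    rwa [min_comm] at this
  have hOsub : (A₂ ∪ B) ∩ (A ∩ A₁) ⊆ ((A₁ ∩ A₂) ∩ A) ∪ ((A ∩ B) ∩ (A₁ \ A₂)) := by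
    rintro z ⟨hz2B, hzA, hz1⟩
    by_cases hz2 : z ∈ A₂
    · exact Or.inl ⟨⟨hz1, hz2⟩, hzA⟩
    · exact Or.inr ⟨⟨hzA, hz2B.resolve_left hz2⟩, hz1, hz2⟩
  have hII : min X₁.ncard X₂.ncard ≤
      ((A₁ ∩ A₂) ∩ A).ncard + ((A ∩ B) ∩ (A₁ \ A₂)).ncard :=
    hII0.trans ((Set.ncard_le_ncard hOsub).trans (Set.ncard_union_le _ _))
  -- bound the order of the new separation
  have hO1sub : (A ∪ A₁) ∩ ((B ∩ A₂) ∪ {x}) ⊆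
      ((A ∩ B) ∩ (A₂ \ A₁)) ∪ (((A₁ ∩ A₂) ∩ B) ∪ {x}) := by
    rintro z ⟨hzl, hzr⟩
    rcases hzr with ⟨hzB, hz2⟩ | hzx
    · by_cases hz1 : z ∈ A₁
      · exact Or.inr (Or.inl ⟨⟨hz1, hz2⟩, hzB⟩)
      · rcases hzl with hzA | hz1'
        · exact Or.inl ⟨⟨hzA, hzB⟩, hz2, hz1⟩
        · exact absurd hz1' hz1
    · exact Or.inr (Or.inr hzx)
  have hO1 : ((A ∪ A₁) ∩ ((B ∩ A₂) ∪ {x})).ncard ≤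
      ((A ∩ B) ∩ (A₂ \ A₁)).ncard + (((A₁ ∩ A₂) ∩ B).ncard + 1) := by
    refine (Set.ncard_le_ncard hO1sub).trans ((Set.ncard_union_le _ _).trans ?_)
    have h := Set.ncard_union_le ((A₁ ∩ A₂) ∩ B) ({x} : Set V)
    simp only [Set.ncard_singleton] at h
    omega
  have hsplit2 : ((A ∩ B) ∩ (A₂ \ A₁)).ncard + ((A ∩ B) ∩ (A₁ ∩ A₂)).ncard
      = ((A ∩ B) ∩ A₂).ncard := by
    rw [← Set.ncard_union_eq ?_]
    · congr 1
      ext z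
      simp only [Set.mem_union, Set.mem_inter_iff, Set.mem_diff]
      tauto
    · rw [Set.disjoint_left]
      rintro z ⟨_, _, hz1⟩ ⟨_, hz1', _⟩
      exact hz1 hz1'
  have hdiff : ((A ∩ B) ∩ (A₁ \ A₂)).ncard ≤ ((A ∩ B) \ ((A ∩ B) ∩ A₂)).ncard :=
    Set.ncard_le_ncard (by rintro z ⟨hzS, hz1, hz2⟩; exact ⟨hzS, fun h => hz2 h.2⟩)
  have htot : ((A ∩ B) \ ((A ∩ B) ∩ A₂)).ncard + ((A ∩ B) ∩ A₂).ncard = (A ∩ B).ncard :=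
    Set.ncard_diff_add_ncard_of_subset Set.inter_subset_left
  have hab : ((A₁ ∩ A₂) ∩ A).ncard + ((A₁ ∩ A₂) ∩ B).ncard
      = (A₁ ∩ A₂).ncard + ((A ∩ B) ∩ (A₁ ∩ A₂)).ncard := by
    have h1' : ((A₁ ∩ A₂) ∩ A) ∪ ((A₁ ∩ A₂) ∩ B) = A₁ ∩ A₂ := by
      rw [← Set.inter_union_distrib_left, hsep.1, Set.inter_univ]
    have h2' : ((A₁ ∩ A₂) ∩ A) ∩ ((A₁ ∩ A₂) ∩ B) = (A ∩ B) ∩ (A₁ ∩ A₂) := by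
      ext z; simp only [Set.mem_inter_iff]; tauto
    have h3' := Set.ncard_union_add_ncard_inter ((A₁ ∩ A₂) ∩ A) ((A₁ ∩ A₂) ∩ B)
    rw [h1', h2'] at h3'
    omega
  have hcard : ((A ∪ A₁) ∩ ((B ∩ A₂) ∪ {x})).ncard < k := by omega
  -- the new separation
  have hP : IsSep G (A ∪ A₁) ((B ∩ A₂) ∪ {x}) := by
    constructor
    · apply Set.eq_univ_of_forall
      intro z
      by_cases hzA : z ∈ A
      · exact Or.inl (Or.inl hzA)
      · by_cases hz1 : z ∈ A₁
        · exact Or.inl (Or.inr hz1)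
        · exact Or.inr (Or.inl ⟨hcovAB z hzA, hcov12 z hz1⟩)
    · rintro u v hadj ⟨hul, hur⟩ ⟨hvl, hvr⟩
      have hvA : v ∉ A := fun h => hvr (Or.inl h)
      have hv1 : v ∉ A₁ := fun h => hvr (Or.inr h)
      have hvne : v ≠ x := fun h => hv1 (h ▸ hx1)
      have hv : v ∈ B ∩ A₂ := by
        rcases hvl with h | h
        · exact h
        · exact absurd h hvne
      have hunx : u ≠ x := fun h => hur (h ▸ Or.inr rfl)
      have hu2' : u ∉ B ∩ A₂ := fun h => hur (Or.inl h)
      by_cases huA : u ∈ A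
      · by_cases huB : u ∈ B
        · have hu2 : u ∉ A₂ := fun h => hu2' ⟨huB, h⟩
          have hu1 : u ∈ A₁ := hcov21 u hu2
          obtain ⟨hux, _⟩ := hdel u v hadj hu1 hu2 hv.2 hv1
          exact hxA (hux ▸ huA)
        · exact hsep.2 u v hadj ⟨huA, huB⟩ ⟨hv.1, hvA⟩
      · have hu1 : u ∈ A₁ := hul.resolve_left huA
        have huB : u ∈ B := hcovAB u huA
        have hu2 : u ∉ A₂ := fun h => hu2' ⟨huB, h⟩
        obtain ⟨hux, _⟩ := hdel u v hadj hu1 hu2 hv.2 hv1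
        exact hunx hux
  have hsub : (B ∩ A₂) ∪ {x} ⊆ B := by
    rintro z (⟨h, _⟩ | h)
    · exact h
    · exact (Set.mem_singleton_iff.mp h) ▸ hxB
  have hne : (B ∩ A₂) ∪ {x} ≠ B := by
    intro hEq
    have hp1 : (A ∩ B) ∩ (A₁ \ A₂) = ∅ := by
      ext z
      simp only [Set.mem_empty_iff_false, iff_false]
      rintro ⟨⟨hzA, hzB⟩, hz1, hz2⟩
      have hz : z ∈ (B ∩ A₂) ∪ {x} := by rw [hEq]; exact hzB
      rcases hz with ⟨_, h⟩ | h
      · exact hz2 h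
      · exact hxA ((Set.mem_singleton_iff.mp h) ▸ hzA)
    have hzero : ((A ∩ B) ∩ (A₁ \ A₂)).ncard = 0 := by
      rw [hp1]; exact Set.ncard_empty _
    have ha : ((A₁ ∩ A₂) ∩ A).ncard ≤ (A₁ ∩ A₂).ncard :=
      Set.ncard_le_ncard Set.inter_subset_left
    omega
  exact ⟨hP, hcard, hsub, hne⟩

private lemma main_aux {V : Type} [Finite V] {G : SimpleGraph V} {k : ℕ}
    {X Y A B : Set V} (hsep : IsSep G A B) (hord : (A ∩ B).ncard < k) (hXA : X ⊆ A)
    (hX : StronglyLinked G X) (hYB2 : 2 * k + 1 ≤ (Y ∩ B).ncard)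
    {x y : V} (hxy : G.Adj x y) (hxB : x ∈ B) (hxA : x ∉ A) (hyB : y ∈ B) (hyA : y ∉ A)
    {X₁ X₂ : Set V} (hu : X₁ ∪ X₂ = X) (hd : Disjoint X₁ X₂)
    (h1 : X₁.Nonempty) (h2 : X₂.Nonempty)
    {A₁ A₂ : Set V} (hs' : IsSep (G.deleteEdges {s(x, y)}) A₁ A₂)
    (hX1 : X₁ ⊆ A₁) (hX2 : X₂ ⊆ A₂)
    (hlt : (A₁ ∩ A₂).ncard < min X₁.ncard X₂.ncard)
    (hx1 : x ∈ A₁) (hx2 : x ∉ A₂) (hy2 : y ∈ A₂) (hy1 : y ∉ A₁) :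
    ∃ A' B' : Set V, IsSep G A' B' ∧ (A' ∩ B').ncard < k ∧ X ⊆ A' ∧
      k ≤ (Y ∩ B').ncard ∧ A ⊆ A' ∧ B' ⊂ B := by
  obtain ⟨hP1, hc1, hsub1, hne1⟩ := sep_aux hsep hord hXA hX hxy hxB hxA hyB hyA
    hu hd h1 h2 hs' hX1 hX2 hlt hx1 hx2 hy2 hy1
  have hs'' : IsSep (G.deleteEdges {s(y, x)}) A₂ A₁ := by
    rw [Sym2.eq_swap]
    exact isSep_symm hs'
  obtain ⟨hP2, hc2, hsub2, hne2⟩ := sep_aux hsep hord hXA hX hxy.symm hyB hyA hxB hxA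
    (by rw [Set.union_comm]; exact hu) hd.symm h2 h1 hs''
    hX2 hX1 (by rw [Set.inter_comm, min_comm]; exact hlt) hy2 hy1 hx1 hx2
  have hBeq : ((B ∩ A₂) ∪ {x}) ∪ ((B ∩ A₁) ∪ {y}) = B := by
    apply Set.Subset.antisymm (Set.union_subset hsub1 hsub2)
    intro z hz
    by_cases hz1 : z ∈ A₁
    · exact Or.inr (Or.inl ⟨hz, hz1⟩)
    · have hz2 : z ∈ A₂ :=
        (show z ∈ A₁ ∪ A₂ from hs'.1 ▸ Set.mem_univ z).resolve_left hz1
      exact Or.inl (Or.inl ⟨hz, hz2⟩)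
  have hYsum : (Y ∩ B).ncard ≤
      (Y ∩ ((B ∩ A₂) ∪ {x})).ncard + (Y ∩ ((B ∩ A₁) ∪ {y})).ncard := by
    calc (Y ∩ B).ncard
        = (Y ∩ ((B ∩ A₂) ∪ {x}) ∪ Y ∩ ((B ∩ A₁) ∪ {y})).ncard := by
          rw [← Set.inter_union_distrib_left, hBeq]
      _ ≤ _ := Set.ncard_union_le _ _
  rcases le_or_gt k (Y ∩ ((B ∩ A₂) ∪ {x})).ncard with hY1 | hY1
  · exact ⟨A ∪ A₁, (B ∩ A₂) ∪ {x}, hP1, hc1, fun z hz => Or.inl (hXA hz),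
      hY1, Set.subset_union_left, Set.ssubset_iff_subset_ne.mpr ⟨hsub1, hne1⟩⟩
  · have hY2 : k ≤ (Y ∩ ((B ∩ A₁) ∪ {y})).ncard := by omega
    exact ⟨A ∪ A₂, (B ∩ A₁) ∪ {y}, hP2, hc2, fun z hz => Or.inl (hXA hz),
      hY2, Set.subset_union_left, Set.ssubset_iff_subset_ne.mpr ⟨hsub2, hne2⟩⟩

end Aux

/-- Lemma 3.10: linking two strongly linked sets, or pushing a
separation, or finding a deletable edge. -/
theorem stronglyLinked_linkage_or_push_or_edge
    (V : Type) [Finite V] (G : SimpleGraph V) (k : ℕ) (hk : 1 ≤ k)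
    (X Y : Set V) (hX : StronglyLinked G X) (hY : StronglyLinked G Y)
    (hXcard : k ≤ X.ncard) (hYcard : 3 * k ≤ Y.ncard) :
    (∃ (u v : Fin k → V) (P : ∀ i, G.Walk (u i) (v i)),
        (∀ i, (P i).IsPath) ∧ (∀ i, u i ∈ X) ∧ (∀ i, v i ∈ Y) ∧
        (∀ i j, i ≠ j → ∀ w, w ∈ (P i).support → w ∉ (P j).support)) ∨
    (∀ A B : Set V, IsSep G A B → (A ∩ B).ncard < k → X ⊆ A → k ≤ (Y ∩ B).ncard →
      (∃ A' B' : Set V, IsSep G A' B' ∧ (A' ∩ B').ncard < k ∧ X ⊆ A' ∧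
        k ≤ (Y ∩ B').ncard ∧ A ⊆ A' ∧ B' ⊂ B) ∨
      (∃ x y : V, G.Adj x y ∧ x ∈ B ∧ y ∈ B ∧
        StronglyLinked (G.deleteEdges {s(x, y)}) X)) := by
  classical
  right
  intro A B hsep hord hXA hYB
  have hYB2 : 2 * k + 1 ≤ (Y ∩ B).ncard := by
    have hsplit : (Y \ B).ncard + (Y ∩ B).ncard = Y.ncard := by
      have h := Set.ncard_diff_add_ncard_of_subset (Set.inter_subset_left : Y ∩ B ⊆ Y)
      rwa [Set.diff_self_inter] at h
    by_cases hne : (Y \ B).Nonempty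
    · have hmin := hY (Y \ B) (Y ∩ B) (Set.diff_union_inter Y B) Set.disjoint_sdiff_inter
        hne (Set.nonempty_of_ncard_ne_zero (by omega)) A B hsep
        (fun z hz => (show z ∈ A ∪ B from hsep.1 ▸ Set.mem_univ z).resolve_right hz.2)
        Set.inter_subset_right
      rcases le_total (Y \ B).ncard (Y ∩ B).ncard with h | h
      · rw [min_eq_left h] at hmin
        omega
      · rw [min_eq_right h] at hmin
        omega
    · rw [Set.not_nonempty_iff_eq_empty] at hne
      rw [hne, Set.ncard_empty] at hsplit
      omega
  by_cases hE : ∃ u v : V, G.Adj u v ∧ u ∈ B ∧ u ∉ A ∧ v ∈ B ∧ v ∉ A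
  · obtain ⟨x, y, hxy, hxB, hxA, hyB, hyA⟩ := hE
    by_cases hsafe : StronglyLinked (G.deleteEdges {s(x, y)}) X
    · exact Or.inr ⟨x, y, hxy, hxB, hyB, hsafe⟩
    · left
      rw [StronglyLinked] at hsafe
      push_neg at hsafe
      obtain ⟨X₁, X₂, hu, hd, h1, h2, A₁, A₂, hs', hX1, hX2, hlt⟩ := hsafe
      obtain ⟨u, w, huw, hu1, hu2, hw2, hw1⟩ :
          ∃ u w : V, G.Adj u w ∧ u ∈ A₁ ∧ u ∉ A₂ ∧ w ∈ A₂ ∧ w ∉ A₁ := by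
        by_contra hc
        push_neg at hc
        have hGsep : IsSep G A₁ A₂ :=
          ⟨hs'.1, fun u w hadj hmu hmw => hmw.2 (hc u w hadj hmu.1 hmu.2 hmw.1)⟩
        exact absurd (hX X₁ X₂ hu hd h1 h2 A₁ A₂ hGsep hX1 hX2) (not_le.mpr hlt)
      have hxy' : (u = x ∧ w = y) ∨ (u = y ∧ w = x) := by
        by_cases hmem : s(u, w) = s(x, y)
        · rwa [Sym2.eq_iff] at hmem
        · exact absurd ⟨hw2, hw1⟩
            (hs'.2 u w (SimpleGraph.deleteEdges_adj.mpr ⟨huw, by simpa using hmem⟩)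
              ⟨hu1, hu2⟩)
      rcases hxy' with ⟨rfl, rfl⟩ | ⟨rfl, rfl⟩
      · exact main_aux hsep hord hXA hX hYB2 hxy hxB hxA hyB hyA hu hd h1 h2 hs'
          hX1 hX2 hlt hu1 hu2 hw2 hw1
      · exact main_aux hsep hord hXA hX hYB2 hxy.symm hyB hyA hxB hxA hu hd h1 h2
          (by rw [Sym2.eq_swap]; exact hs') hX1 hX2 hlt hu1 hu2 hw2 hw1
  · left
    push_neg at hE
    obtain ⟨v, ⟨hvY, hvB⟩, hvA⟩ : ((Y ∩ B) \ A).Nonempty := by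
      by_contra hc
      rw [Set.not_nonempty_iff_eq_empty, Set.diff_eq_empty] at hc
      have hle : (Y ∩ B).ncard ≤ (A ∩ B).ncard :=
        Set.ncard_le_ncard (fun z hz => ⟨hc hz, hz.2⟩)
      omega
    refine ⟨A ∪ {v}, B \ {v}, ⟨?_, ?_⟩, ?_, fun z hz => Or.inl (hXA hz), ?_,
      Set.subset_union_left, ?_⟩
    · apply Set.eq_univ_of_forall
      intro z
      by_cases hzv : z = v
      · exact Or.inl (Or.inr (by simp [hzv]))
      · by_cases hzA : z ∈ A
        · exact Or.inl (Or.inl hzA)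
        · exact Or.inr ⟨(show z ∈ A ∪ B from hsep.1 ▸ Set.mem_univ z).resolve_left hzA,
            fun h => hzv (Set.mem_singleton_iff.mp h)⟩
    · rintro p q hadj ⟨hpl, hpr⟩ ⟨⟨hqB, hqv⟩, hqr⟩
      have hqA : q ∉ A := fun h => hqr (Or.inl h)
      rcases hpl with hpA | hpv
      · by_cases hpB : p ∈ B
        · have hpv' : p = v := by
            by_contra hcne
            exact hpr ⟨hpB, fun hm => hcne (Set.mem_singleton_iff.mp hm)⟩
          exact hvA (hpv' ▸ hpA)
        · exact hsep.2 p q hadj ⟨hpA, hpB⟩ ⟨hqB, hqA⟩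
      · obtain rfl : p = v := Set.mem_singleton_iff.mp hpv
        exact hqA (hE p q hadj hvB hvA hqB)
    · have heq : (A ∪ {v}) ∩ (B \ {v}) = A ∩ B := by
        ext z
        constructor
        · rintro ⟨zl | zv, hzB, hzv⟩
          · exact ⟨zl, hzB⟩
          · exact absurd zv hzv
        · rintro ⟨hzA, hzB⟩
          exact ⟨Or.inl hzA, hzB, fun h => hvA ((Set.mem_singleton_iff.mp h) ▸ hzA)⟩
      rw [heq]
      exact hord
    · have hveq : Y ∩ (B \ {v}) = (Y ∩ B) \ {v} := by
        ext z
        simp only [Set.mem_inter_iff, Set.mem_diff]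
        tauto
      have hc := Set.ncard_diff_singleton_add_one (show v ∈ Y ∩ B from ⟨hvY, hvB⟩)
      rw [hveq]
      omega
    · refine Set.ssubset_iff_subset_ne.mpr ⟨Set.diff_subset, fun h => ?_⟩
      have hv' : v ∈ B \ {v} := by rw [h]; exact hvB
      exact hv'.2 rfl
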